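/- arXiv:2410.13578 — 3 statements merged into one kernel-verified Lean document; each statement's English description precedes it below -/
import Mathlib

section
/- Let q be a prime power, K = F_{q²}, and let a ∈ K be a nonzero element with a^q = a (i.e., a lies in the subfield F_q of K and a ≠ 0). The number of solutions (x₁,…,x_n) ∈ K^n of the diagonal equation x₁^{q+1} + x₂^{q+1} + ⋯ + x_n^{q+1} = a equals q^{n−1}(q^n + 1) if n is odd, and equals q^{n−1}(q^n − 1) if n is even. -/
/-!
For `y ≠ 0`, `y ^ (q + 1)` is the norm from `𝔽_{q²}` to `𝔽_q`; since `Kˣ` is cyclic of order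
`(q - 1)(q + 1)`, the norm maps `Kˣ` onto `𝔽_qˣ` with fibres of size `q + 1`. Rescaling a solution
by an element of norm `c'/c` shows that the number of solutions is the same value `A n` for every
right-hand side `c ∈ 𝔽_qˣ`. With `Z n` the number of solutions for `c = 0`, splitting off the last
coordinate gives `Z (n+1) = Z n + (q² - 1) A n` and `A (n+1) = (q + 1) Z n + (q² - q - 1) A n`,
and with `A 0 = 0`, `Z 0 = 1` this recurrence is solved by `A n = q^(n-1) (q^n - (-1)^n)`.
-/

open Finset Polynomial

theorem IsCyclic.range_powMonoidHom_eq_ker {G : Type*} [CommGroup G] [IsCyclic G] [Finite G]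
    {m d : ℕ} (h : Nat.card G = m * d) :
    (powMonoidHom d : G →* G).range = (powMonoidHom m).ker := by
  have hd : d ≠ 0 := by
    rintro rfl
    exact Nat.card_pos.ne' (by simpa using h)
  refine Subgroup.eq_of_le_of_card_ge ?_ ?_
  · rintro _ ⟨x, rfl⟩
    rw [MonoidHom.mem_ker, powMonoidHom_apply, powMonoidHom_apply, ← pow_mul, mul_comm, ← h,
      pow_card_eq_one']
  · rw [IsCyclic.card_powMonoidHom_ker, IsCyclic.card_powMonoidHom_range, h,
      Nat.gcd_mul_left_left, Nat.gcd_mul_right_left, Nat.mul_div_cancel _ (Nat.pos_of_ne_zero hd)]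

section FiniteField

variable {K : Type*} [Field K] [Fintype K]

theorem exists_isPrimitiveRoot_of_dvd_card_sub_one {n : ℕ} [NeZero n]
    (hn : n ∣ Fintype.card K - 1) : ∃ ζ : K, IsPrimitiveRoot ζ n := by
  rw [← card_rootsOfUnity_eq_iff_exists_isPrimitiveRoot, rootsOfUnity_eq_ker,
    IsCyclic.card_powMonoidHom_ker, Nat.card_units, Nat.card_eq_fintype_card,
    Nat.gcd_eq_right hn]

variable {q : ℕ}

theorem sub_pow_of_card_eq_sq (hq : IsPrimePow q) (hK : Fintype.card K = q ^ 2) (x y : K) :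
    (x - y) ^ q = x ^ q - y ^ q := by
  obtain ⟨p, k, hp, -, rfl⟩ := hq
  have : Fact p.Prime := ⟨hp.nat_prime⟩
  have : CharP K p := charP_of_card_eq_prime_pow (hK.trans (pow_mul p k 2).symm)
  exact sub_pow_char_pow x y k

theorem pow_add_one_pow_of_card_eq_sq (hK : Fintype.card K = q ^ 2) (y : K) :
    (y ^ (q + 1)) ^ q = y ^ (q + 1) := by
  rw [← pow_mul, add_one_mul, ← sq, ← hK, pow_add, FiniteField.pow_card, pow_succ']

theorem exists_pow_add_one_eq_of_card_eq_sq (hK : Fintype.card K = q ^ 2) {c : K} (hc : c ≠ 0)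
    (hcq : c ^ q = c) : ∃ y : K, y ^ (q + 1) = c := by
  have hcard : Nat.card Kˣ = (q - 1) * (q + 1) := by
    rw [Nat.card_units, Nat.card_eq_fintype_card, hK, mul_comm, ← Nat.sq_sub_sq, one_pow]
  have hmem : Units.mk0 c hc ∈ (powMonoidHom (q - 1) : Kˣ →* Kˣ).ker := by
    rw [MonoidHom.mem_ker, powMonoidHom_apply, Units.ext_iff, Units.val_pow_eq_pow_val,
      Units.val_mk0, Units.val_one]
    rcases q.eq_zero_or_pos with rfl | hq
    · exact pow_zero c
    · exact mul_right_cancel₀ hc (by rw [pow_sub_one_mul hq.ne', hcq, one_mul])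
  rw [← IsCyclic.range_powMonoidHom_eq_ker hcard] at hmem
  obtain ⟨y, hy⟩ := hmem
  exact ⟨y, by simpa [Units.ext_iff] using hy⟩

theorem card_pow_add_one_eq_of_card_eq_sq [DecidableEq K] (hK : Fintype.card K = q ^ 2)
    {c : K} (hc : c ≠ 0) (hcq : c ^ q = c) : #{y : K | y ^ (q + 1) = c} = q + 1 := by
  obtain ⟨ζ, hζ⟩ : ∃ ζ : K, IsPrimitiveRoot ζ (q + 1) :=
    exists_isPrimitiveRoot_of_dvd_card_sub_one ⟨q - 1, by rw [hK, ← Nat.sq_sub_sq, one_pow]⟩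
  have hroots : ({y : K | y ^ (q + 1) = c} : Finset K) = nthRootsFinset (q + 1) c := by
    ext y
    simp [mem_nthRootsFinset q.succ_pos]
  rw [hroots, nthRootsFinset_def, Multiset.toFinset_card_of_nodup (hζ.nthRoots_nodup hc),
    hζ.card_nthRoots, if_pos (exists_pow_add_one_eq_of_card_eq_sq hK hc hcq)]

end FiniteField

section DiagCount

variable {K : Type*}

noncomputable def diagCount [CommSemiring K] (k n : ℕ) (c : K) : ℕ :=
  Nat.card {x : Fin n → K // ∑ i, x i ^ k = c}

theorem diagCount_zero [CommSemiring K] [DecidableEq K] (k : ℕ) (c : K) :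
    diagCount k 0 c = if c = 0 then 1 else 0 := by
  rcases eq_or_ne c 0 with rfl | hc
  · simp [diagCount]
  · simp [diagCount, hc, hc.symm]

theorem diagCount_succ [CommRing K] [Fintype K] (k n : ℕ) (c : K) :
    diagCount k (n + 1) c = ∑ y : K, diagCount k n (c - y ^ k) := by
  let e : {x : Fin (n + 1) → K // ∑ i, x i ^ k = c} ≃
      Σ y : K, {t : Fin n → K // ∑ i, t i ^ k = c - y ^ k} :=
    (Equiv.subtypeEquiv (Fin.consEquiv fun _ => K).symm fun x => by
      rw [Fin.sum_univ_succ, eq_sub_iff_add_eq']; rfl).trans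
      (Equiv.subtypeProdEquivSigmaSubtype fun y (t : Fin n → K) => ∑ i, t i ^ k = c - y ^ k)
  rw [diagCount, Nat.card_congr e, Nat.card_sigma]
  rfl

theorem diagCount_pow_mul [Field K] (k n : ℕ) {d : K} (hd : d ≠ 0) (c : K) :
    diagCount k n (d ^ k * c) = diagCount k n c := by
  refine (Nat.card_congr (Equiv.subtypeEquiv
    (Equiv.piCongrRight fun _ => Equiv.mulLeft₀ d hd) fun x => ?_)).symm
  simp only [Equiv.piCongrRight_apply, Equiv.mulLeft₀_apply, Pi.map_apply, mul_pow, ← mul_sum]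
  exact (mul_right_inj' (pow_ne_zero k hd)).symm

variable [Field K] [Fintype K] {q : ℕ}

theorem diagCount_eq_of_pow_eq_self (hK : Fintype.card K = q ^ 2) (n : ℕ) {a c : K}
    (ha : a ≠ 0) (haq : a ^ q = a) (hc : c ≠ 0) (hcq : c ^ q = c) :
    diagCount (q + 1) n c = diagCount (q + 1) n a := by
  obtain ⟨d, hd⟩ := exists_pow_add_one_eq_of_card_eq_sq hK (div_ne_zero hc ha)
    (by rw [div_pow, haq, hcq])
  have hd0 : d ≠ 0 := by
    rintro rfl
    exact div_ne_zero hc ha (by simpa using hd.symm)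
  rw [← diagCount_pow_mul (q + 1) n hd0 a, hd, div_mul_cancel₀ c ha]

theorem diagCount_succ_of_pow_eq_self [DecidableEq K] (hq : IsPrimePow q)
    (hK : Fintype.card K = q ^ 2) (n : ℕ) {a c : K} (ha : a ≠ 0) (haq : a ^ q = a)
    (hcq : c ^ q = c) :
    (diagCount (q + 1) (n + 1) c : ℤ) =
      #{y : K | y ^ (q + 1) = c} * diagCount (q + 1) n (0 : K) +
        (q ^ 2 - #{y : K | y ^ (q + 1) = c}) * diagCount (q + 1) n a := by
  have hterm (y : K) : diagCount (q + 1) n (c - y ^ (q + 1)) =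
      if y ^ (q + 1) = c then diagCount (q + 1) n (0 : K) else diagCount (q + 1) n a := by
    split_ifs with hy
    · rw [hy, sub_self]
    · refine diagCount_eq_of_pow_eq_self hK n ha haq (sub_ne_zero.mpr (Ne.symm hy)) ?_
      rw [sub_pow_of_card_eq_sq hq hK, hcq, pow_add_one_pow_of_card_eq_sq hK]
  have hsplit : (q : ℤ) ^ 2 = #{y : K | y ^ (q + 1) = c} + #{y : K | ¬y ^ (q + 1) = c} := by
    rw [← Nat.cast_add, card_filter_add_card_filter_not, card_univ, hK, Nat.cast_pow]
  simp only [diagCount_succ, hterm, sum_ite, sum_const, smul_eq_mul]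
  rw [hsplit]
  push_cast
  ring

end DiagCount

theorem eq_closed_form_of_recurrence (q : ℤ) {A Z : ℕ → ℤ} (hA₀ : A 0 = 0) (hZ₀ : Z 0 = 1)
    (hA : ∀ n, A (n + 1) = (q + 1) * Z n + (q ^ 2 - q - 1) * A n)
    (hZ : ∀ n, Z (n + 1) = Z n + (q ^ 2 - 1) * A n) (n : ℕ) :
    A (n + 1) = q ^ n * (q ^ (n + 1) - (-1) ^ (n + 1)) := by
  suffices A (n + 1) = q ^ n * (q ^ (n + 1) - (-1) ^ (n + 1)) ∧
      Z (n + 1) = q ^ n * (q ^ (n + 1) + (-1) ^ (n + 1) * (q - 1)) from this.1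
  induction n with
  | zero => simp [hA, hZ, hA₀, hZ₀]
  | succ n ih =>
    rw [hA (n + 1), hZ (n + 1), ih.1, ih.2]
    constructor <;> ring

/-- In the finite field `K = F_{q²}`, for a nonzero element `a` of the
subfield `F_q` (i.e. `a ≠ 0` and `a^q = a`), the number of solutions of the diagonal
equation `x₁^{q+1} + ⋯ + x_n^{q+1} = a` is `q^{n-1}(q^n + 1)` if `n` is odd and
`q^{n-1}(q^n - 1)` if `n` is even. -/
theorem card_diagonal_eq_nonzero
    (q : ℕ) (hq : IsPrimePow q)
    {K : Type*} [Field K] [Fintype K] (hK : Fintype.card K = q ^ 2)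
    (a : K) (ha : a ≠ 0) (haq : a ^ q = a)
    (n : ℕ) (hn : 0 < n) :
    (Nat.card {x : Fin n → K // ∑ i, x i ^ (q + 1) = a} : ℤ) =
      if Odd n then (q : ℤ) ^ (n - 1) * ((q : ℤ) ^ n + 1)
      else (q : ℤ) ^ (n - 1) * ((q : ℤ) ^ n - 1) := by
  classical
  obtain ⟨m, rfl⟩ : ∃ m, n = m + 1 := ⟨n - 1, by omega⟩
  have hcard₀ : #{y : K | y ^ (q + 1) = 0} = 1 := card_eq_one.mpr ⟨0, by ext; simp⟩
  have key := eq_closed_form_of_recurrence q (A := fun n => diagCount (q + 1) n a)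
    (Z := fun n => diagCount (q + 1) n (0 : K))
    (by simp [diagCount_zero, ha]) (by simp [diagCount_zero])
    (fun n => by
      rw [diagCount_succ_of_pow_eq_self hq hK n ha haq haq,
        card_pow_add_one_eq_of_card_eq_sq hK ha haq]
      push_cast
      ring)
    (fun n => by
      rw [diagCount_succ_of_pow_eq_self hq hK n ha haq (zero_pow hq.ne_zero), hcard₀]
      push_cast
      ring) m
  rw [show Nat.card _ = diagCount (q + 1) (m + 1) a from rfl, key, Nat.add_sub_cancel]
  rcases Nat.even_or_odd (m + 1) with h | h
  · rw [if_neg (Nat.not_odd_iff_even.mpr h), h.neg_one_pow]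
  · rw [if_pos h, h.neg_one_pow, sub_neg_eq_add]
end

section
/- Let q be a prime power, K = F_{q²}, and let C be a linear [n,k]_{q²} code whose Hermitian hull Hull_H(C) has dimension ℓ. Then the number of Hermitian self-orthogonal codewords of C \ Hull_H(C), i.e. the number of c ∈ C with c ∉ Hull_H(C) and ⟨c,c⟩_H = 0, equals (N₀^{q+1}(k−ℓ) − 1) · q^{2ℓ}. -/
open scoped BigOperators
open Matrix

noncomputable section

/-- The Hermitian inner product `⟨x,y⟩_H = ∑ i, x i * (y i)^q`, where the conjugation
`x ↦ x^q` is given by the ring homomorphism `σ`. -/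
def hermInner {K : Type*} [Field K] {n : ℕ} (σ : K →+* K) (x y : Fin n → K) : K :=
  ∑ i, x i * σ (y i)

/-- The Hermitian dual `C^{⊥H} = {y | ⟨x,y⟩_H = 0 for all x ∈ C}` of a code `C ⊆ K^n`. -/
def hermDual {K : Type*} [Field K] {n : ℕ} (σ : K →+* K) (C : Submodule K (Fin n → K)) :
    Submodule K (Fin n → K) where
  carrier := {y | ∀ x ∈ C, hermInner σ x y = 0}
  zero_mem' := by
    intro x hx
    simp [hermInner]
  add_mem' := by
    intro y z hy hz x hx
    have h1 := hy x hx
    have h2 := hz x hx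
    simp only [hermInner, Pi.add_apply, map_add, mul_add, Finset.sum_add_distrib] at h1 h2 ⊢
    rw [h1, h2, add_zero]
  smul_mem' := by
    intro c y hy x hx
    have h := hy x hx
    simp only [hermInner, Pi.smul_apply, smul_eq_mul, _root_.map_mul] at h ⊢
    calc ∑ i, x i * (σ c * σ (y i)) = σ c * ∑ i, x i * σ (y i) := by
          rw [Finset.mul_sum]; exact Finset.sum_congr rfl fun i _ => by ring
      _ = 0 := by rw [h, mul_zero]

/-- `N₀^{q+1}(m) = q^{m-1}(q^m - q + 1)` for odd `m` and `q^{m-1}(q^m + q - 1)` for even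
`m`: the number of solutions of `x₁^{q+1} + ⋯ + x_m^{q+1} = 0` in `F_{q²}^m`. -/
def N0 (q : ℤ) (m : ℕ) : ℤ :=
  if Odd m then q ^ (m - 1) * (q ^ m - q + 1) else q ^ (m - 1) * (q ^ m + q - 1)


/-!
Restricted to `C`, the Hermitian product is a Hermitian form `B` whose radical is the hull.
Over `F_{q²}` a Hermitian form vanishing on the diagonal is zero (polarize and use some `t` with
`t^q ≠ t`). Otherwise pick `v` with `B v v ≠ 0`; then `V = Kv ⊥ v^⊥`, the radical lies in `v^⊥`,
and `B (w + c v) (w + c v) = B w w + c^{q+1} B v v`. As `c ↦ c^{q+1}` takes every nonzero value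
of `F_q` exactly `q + 1` times, the number `N(V)` of isotropic vectors satisfies
`N(V) = (q + 1) |v^⊥| - q N(v^⊥)`. By induction `N(V) = A(m) q^{2r}`, with `r` the dimension of the
radical, `m` the rank and `A(m) = N₀^{q+1}(m)` for `m ≥ 1`. Finally the radical consists of
isotropic vectors, and removing it leaves `(A(m) - 1) q^{2r}`.
-/

open Module

/-- The number of isotropic vectors of a nondegenerate Hermitian form of rank `m` over `F_{q²}`.
Unlike `N0 q 0 = q` (truncated `m - 1`), it is also correct for `m = 0`. -/
def isotropicCount (q : ℤ) : ℕ → ℤ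
  | 0 => 1
  | m + 1 => (q + 1) * q ^ (2 * m) - q * isotropicCount q m

theorem isotropicCount_eq_N0 (q : ℤ) {m : ℕ} (hm : m ≠ 0) : isotropicCount q m = N0 q m := by
  induction m with
  | zero => exact absurd rfl hm
  | succ m ih =>
    rcases Nat.eq_zero_or_pos m with rfl | hm'
    · simp [isotropicCount, N0]
    · obtain ⟨j, rfl⟩ := Nat.exists_eq_add_of_lt hm'
      rw [isotropicCount, ih (by omega)]
      simp only [N0, zero_add, Nat.add_sub_cancel, Nat.odd_add_one, not_not]
      split_ifs <;> ring

section FiniteField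

variable {K : Type*} [Field K] [Fintype K] {q : ℕ}

theorem two_le_of_card_eq_sq (hK : Fintype.card K = q ^ 2) : 2 ≤ q := by
  have h := hK ▸ Fintype.one_lt_card (α := K)
  by_contra! hq
  interval_cases q <;> simp at h

theorem exists_pow_ne_self (hK : Fintype.card K = q ^ 2) : ∃ t : K, t ^ q ≠ t := by
  have hq := two_le_of_card_eq_sq hK
  have h := Polynomial.exists_eval_ne_zero_of_natDegree_lt_card
    (Polynomial.X ^ q - Polynomial.X : Polynomial K)
    (FiniteField.X_pow_card_sub_X_ne_zero K (by omega)) (by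
      rw [FiniteField.X_pow_card_sub_X_natDegree_eq K (by omega), Cardinal.mk_fintype, hK]
      exact_mod_cast (show q < q ^ 2 by nlinarith))
  simpa [sub_eq_zero] using h

theorem card_units_eq_of_card_eq_sq (hK : Fintype.card K = q ^ 2) :
    Nat.card Kˣ = (q + 1) * (q - 1) := by
  rw [Nat.card_units, Nat.card_eq_fintype_card, hK, ← Nat.sq_sub_sq, one_pow]

theorem card_rootsOfUnity_succ_of_card_eq_sq (hK : Fintype.card K = q ^ 2) :
    Nat.card (rootsOfUnity (q + 1) K) = q + 1 := by
  have h := IsCyclic.card_powMonoidHom_ker Kˣ (q + 1)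
  rwa [card_units_eq_of_card_eq_sq hK, Nat.gcd_mul_right_left] at h

theorem exists_pow_succ_eq_of_pow_eq_self (hK : Fintype.card K = q ^ 2) {b : K} (hb0 : b ≠ 0)
    (hb : b ^ q = b) : ∃ α : K, α ^ (q + 1) = b := by
  have hq := two_le_of_card_eq_sq hK
  set N : Kˣ →* Kˣ := powMonoidHom (q + 1)
  have hNle : N.range ≤ rootsOfUnity (q - 1) K := by
    rintro _ ⟨u, rfl⟩
    rw [mem_rootsOfUnity, powMonoidHom_apply, ← pow_mul, ← card_units_eq_of_card_eq_sq hK]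
    exact pow_card_eq_one'
  have hNeq : N.range = rootsOfUnity (q - 1) K := by
    have : NeZero (q - 1) := ⟨by omega⟩
    refine Subgroup.eq_of_le_of_card_ge hNle ((card_rootsOfUnity K (q - 1)).trans (le_of_eq ?_))
    rw [eq_comm, IsCyclic.card_powMonoidHom_range, card_units_eq_of_card_eq_sq hK,
      Nat.gcd_mul_right_left, Nat.mul_div_cancel_left _ (by omega)]
  have hmem : Units.mk0 b hb0 ∈ rootsOfUnity (q - 1) K := by
    rw [mem_rootsOfUnity', Units.val_mk0]
    refine mul_right_cancel₀ hb0 ?_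
    rw [← pow_succ, Nat.sub_add_cancel (by omega), hb, one_mul]
  obtain ⟨α, hα⟩ := hNeq ▸ hmem
  exact ⟨α, congrArg Units.val hα⟩

open Classical in
theorem card_pow_succ_eq_of_pow_eq_self (hK : Fintype.card K = q ^ 2) {b : K} (hb : b ^ q = b) :
    Nat.card {c : K // c ^ (q + 1) = b} = if b = 0 then 1 else q + 1 := by
  split_ifs with hb0
  · subst hb0
    simp only [pow_eq_zero_iff (Nat.succ_ne_zero q)]
    exact Nat.card_unique
  · obtain ⟨ζ, hζ⟩ := card_rootsOfUnity_eq_iff_exists_isPrimitiveRoot.mp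
      (card_rootsOfUnity_succ_of_card_eq_sq hK)
    have hex := exists_pow_succ_eq_of_pow_eq_self hK hb0 hb
    have hroots : {c : K // c ^ (q + 1) = b} ≃ Polynomial.nthRootsFinset (q + 1) b :=
      Equiv.subtypeEquivRight fun c ↦ (Polynomial.mem_nthRootsFinset q.succ_pos b).symm
    rw [Nat.card_congr hroots, Nat.card_eq_finsetCard, Polynomial.nthRootsFinset_def,
      Multiset.toFinset_card_of_nodup (hζ.nthRoots_nodup hb0), hζ.card_nthRoots, if_pos hex]

open Classical in
theorem card_add_pow_succ_mul_eq_zero (hK : Fintype.card K = q ^ 2) {σ : K →+* K}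
    (hσ : ∀ x, σ x = x ^ q) {a b : K} (ha0 : a ≠ 0) (ha : σ a = a) (hb : σ b = b) :
    Nat.card {c : K // b + c ^ (q + 1) * a = 0} = if b = 0 then 1 else q + 1 := by
  have hba : (-b / a) ^ q = -b / a := by rw [← hσ, map_div₀, map_neg, ha, hb]
  rw [← if_congr (show -b / a = 0 ↔ b = 0 by simp [ha0]) rfl rfl,
    ← card_pow_succ_eq_of_pow_eq_self hK hba]
  refine Nat.card_congr (Equiv.subtypeEquivRight fun c ↦ ?_)
  rw [eq_div_iff ha0, add_comm, add_eq_zero_iff_eq_neg]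

end FiniteField

section Functional

variable {K V : Type*} [Field K] [AddCommGroup V] [Module K V] (f : V →ₗ[K] K) {v : V}

theorem sub_div_smul_mem_ker (hv : f v ≠ 0) (x : V) : x - (f x / f v) • v ∈ LinearMap.ker f := by
  simp [div_mul_cancel₀ _ hv]

def kerProdEquiv (hv : f v ≠ 0) : LinearMap.ker f × K ≃ V where
  toFun p := p.1 + p.2 • v
  invFun x := (⟨_, sub_div_smul_mem_ker f hv x⟩, f x / f v)
  left_inv := by
    rintro ⟨⟨w, hw⟩, c⟩
    rw [LinearMap.mem_ker] at hw
    have hc : f (w + c • v) / f v = c := by simp [hw, mul_div_cancel_right₀ _ hv]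
    ext <;> simp only [hc, add_sub_cancel_right]
  right_inv x := by simp

end Functional

section Hermitian

variable {K V : Type*} [Field K] [AddCommGroup V] [Module K V] {σ : K →+* K}
  {B : V →ₗ[K] V →ₛₗ[σ] K} {q : ℕ}

theorem eq_zero_of_forall_apply_self_eq_zero (hB : ∀ x y, σ (B x y) = B y x) {t : K}
    (ht : σ t ≠ t) (h : ∀ x, B x x = 0) : B = 0 := by
  have hneg : ∀ x y, σ (B x y) = -B x y := by
    intro x y
    have hxy := h (x + y)
    simp only [map_add, LinearMap.add_apply, h x, h y, zero_add, add_zero, ← hB x y] at hxy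
    exact eq_neg_of_add_eq_zero_left hxy
  ext x y
  have htxy := hneg (t • x) y
  simp only [map_smul, LinearMap.smul_apply, smul_eq_mul, map_mul, hneg x y] at htxy
  have : (t - σ t) * B x y = 0 := by linear_combination htxy
  exact (mul_eq_zero.mp this).resolve_left (sub_ne_zero.mpr ht.symm)

theorem apply_add_smul_self_of_apply_eq_zero (hσ : ∀ x, σ x = x ^ q)
    (hB : ∀ x y, σ (B x y) = B y x) {v w : V} (hw : B w v = 0) (c : K) :
    B (w + c • v) (w + c • v) = B w w + c ^ (q + 1) * B v v := by
  have hw' : B v w = 0 := by rw [← hB, hw, map_zero]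
  simp only [map_add, map_smul, LinearMap.add_apply, LinearMap.smul_apply, map_smulₛₗ,
    smul_eq_mul, hw, hw', hσ]
  ring

theorem ker_domRestrict₁₂_ker_flip {v : V} (hv : B v v ≠ 0) :
    LinearMap.ker (B.domRestrict₁₂ (LinearMap.ker (B.flip v)) (LinearMap.ker (B.flip v))) =
      (LinearMap.ker B).comap (LinearMap.ker (B.flip v)).subtype := by
  ext w
  simp only [LinearMap.mem_ker, Submodule.mem_comap, Submodule.subtype_apply]
  refine ⟨fun hw ↦ LinearMap.ext fun y ↦ ?_,
    fun hw ↦ by ext; simp [LinearMap.domRestrict₁₂_apply, hw]⟩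
  have hwv : B w v = 0 := LinearMap.mem_ker.mp w.2
  have hy := LinearMap.congr_fun hw ⟨_, sub_div_smul_mem_ker (B.flip v) hv y⟩
  rwa [LinearMap.domRestrict₁₂_apply, map_sub, map_smulₛₗ, hwv, smul_zero, sub_zero] at hy

theorem ker_le_ker_flip (v : V) : LinearMap.ker B ≤ LinearMap.ker (B.flip v) :=
  fun x hx ↦ by simp [LinearMap.mem_ker.mp hx]

variable [Fintype K]

theorem card_isotropic_eq_of_apply_self_ne_zero [Finite V] (hK : Fintype.card K = q ^ 2)
    (hσ : ∀ x, σ x = x ^ q) (hB : ∀ x y, σ (B x y) = B y x) {v : V} (hv : B v v ≠ 0) :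
    (Nat.card {x : V // B x x = 0} : ℤ) =
      (q + 1) * Nat.card (LinearMap.ker (B.flip v)) -
        q * Nat.card {w : LinearMap.ker (B.flip v) //
          B.domRestrict₁₂ (LinearMap.ker (B.flip v)) (LinearMap.ker (B.flip v)) w w = 0} := by
  classical
  set W := LinearMap.ker (B.flip v)
  have : Fintype V := Fintype.ofFinite V
  have hfiber (w : W) := card_add_pow_succ_mul_eq_zero hK hσ hv (hB v v) (hB w w)
  calc (Nat.card {x : V // B x x = 0} : ℤ)
      = Nat.card {p : W × K // B p.1 p.1 + p.2 ^ (q + 1) * B v v = 0} := by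
        refine congrArg _ (Nat.card_congr
          ((kerProdEquiv (B.flip v) hv).subtypeEquiv fun p ↦ ?_)).symm
        change _ ↔ B (p.1 + p.2 • v) (p.1 + p.2 • v) = 0
        rw [apply_add_smul_self_of_apply_eq_zero hσ hB (LinearMap.mem_ker.mp p.1.2)]
    _ = ∑ w : W, (if B w w = 0 then 1 else (q + 1 : ℤ)) := by
        rw [Nat.card_congr (Equiv.subtypeProdEquivSigmaSubtype
          fun (w : W) (c : K) ↦ B w w + c ^ (q + 1) * B v v = 0), Nat.card_sigma]
        push_cast [hfiber]
        rfl
    _ = (q + 1) * Nat.card W - q * Nat.card {w : W // B w w = 0} := by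
        have hsplit (w : W) : (if B w w = 0 then 1 else (q + 1 : ℤ)) =
            (q + 1) - q * (if B w w = 0 then 1 else 0) := by
          split_ifs <;> ring
        rw [Finset.sum_congr rfl fun w _ ↦ hsplit w, Finset.sum_sub_distrib, ← Finset.mul_sum,
          Finset.sum_boole, Finset.sum_const, Finset.card_univ, Nat.card_eq_fintype_card,
          Nat.card_eq_fintype_card, Fintype.card_subtype (fun w : W ↦ B w w = 0), nsmul_eq_mul,
          mul_comm]

variable [FiniteDimensional K V]

theorem natCard_eq_pow_finrank (hK : Fintype.card K = q ^ 2) :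
    (Nat.card V : ℤ) = q ^ (2 * finrank K V) := by
  have : Finite V := Module.finite_of_finite K
  have : Fintype V := Fintype.ofFinite V
  rw [Nat.card_eq_fintype_card, Module.card_eq_pow_finrank (K := K), hK, ← pow_mul]
  push_cast
  rfl

theorem card_isotropic (hK : Fintype.card K = q ^ 2) (hσ : ∀ x, σ x = x ^ q)
    (hB : ∀ x y, σ (B x y) = B y x) :
    (Nat.card {x : V // B x x = 0} : ℤ) =
      isotropicCount q (finrank K V - finrank K (LinearMap.ker B)) *
        q ^ (2 * finrank K (LinearMap.ker B)) := by
  induction hd : finrank K V using Nat.strong_induction_on generalizing V with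
  | _ d ih =>
    by_cases hiso : ∀ x, B x x = 0
    · obtain ⟨t, ht⟩ := exists_pow_ne_self hK
      obtain rfl := eq_zero_of_forall_apply_self_eq_zero hB (hσ t ▸ ht) hiso
      rw [← hd, LinearMap.ker_zero, finrank_top, Nat.sub_self, isotropicCount, one_mul,
        ← natCard_eq_pow_finrank hK]
      exact congrArg _ (Nat.card_congr (Equiv.subtypeUnivEquiv fun x ↦ rfl))
    push Not at hiso
    obtain ⟨v, hv⟩ := hiso
    set W := LinearMap.ker (B.flip v)
    have hW : finrank K W + 1 = d :=
      hd ▸ Dual.finrank_ker_add_one_of_ne_zero (f := B.flip v) fun h ↦ hv (LinearMap.congr_fun h v)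
    have hker : finrank K (LinearMap.ker (B.domRestrict₁₂ W W)) = finrank K (LinearMap.ker B) := by
      rw [ker_domRestrict₁₂_ker_flip hv]
      exact (Submodule.comapSubtypeEquivOfLe (ker_le_ker_flip v)).finrank_eq
    obtain ⟨m, hm⟩ := Nat.exists_eq_add_of_le (hker ▸ Submodule.finrank_le _)
    have : Finite V := Module.finite_of_finite K
    rw [card_isotropic_eq_of_apply_self_ne_zero hK hσ hB hv,
      ih (finrank K W) (by omega) (B := B.domRestrict₁₂ W W) (fun x y ↦ hB x y) rfl,
      natCard_eq_pow_finrank hK, hker, hm, Nat.add_sub_cancel_left,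
      show d - finrank K (LinearMap.ker B) = m + 1 by omega, isotropicCount]
    ring

theorem card_isotropic_notMem_ker (hK : Fintype.card K = q ^ 2) (hσ : ∀ x, σ x = x ^ q)
    (hB : ∀ x y, σ (B x y) = B y x) (hr : finrank K (LinearMap.ker B) < finrank K V) :
    (Nat.card {x : V // x ∉ LinearMap.ker B ∧ B x x = 0} : ℤ) =
      (N0 q (finrank K V - finrank K (LinearMap.ker B)) - 1) *
        q ^ (2 * finrank K (LinearMap.ker B)) := by
  classical
  have : Finite V := Module.finite_of_finite K
  have : Fintype V := Fintype.ofFinite V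
  have hsplit : Nat.card {x : V // B x x = 0} =
      Nat.card (LinearMap.ker B) + Nat.card {x : V // x ∉ LinearMap.ker B ∧ B x x = 0} := by
    have hiff (x : V) : B x x = 0 ↔ x ∈ LinearMap.ker B ∨ (x ∉ LinearMap.ker B ∧ B x x = 0) := by
      by_cases hx : x ∈ LinearMap.ker B
      · simp [hx, LinearMap.mem_ker.mp hx]
      · simp [hx]
    simp only [Nat.card_congr (Equiv.subtypeEquivRight hiff), Nat.card_eq_fintype_card]
    exact Fintype.card_subtype_or_disjoint _ _ fun r hr₁ hr₂ x hx ↦ (hr₂ x hx).1 (hr₁ x hx)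
  rw [← isotropicCount_eq_N0 q (by omega), sub_one_mul, ← card_isotropic hK hσ hB,
    ← natCard_eq_pow_finrank hK, hsplit]
  push_cast
  ring

end Hermitian

section HermitianCode

variable {K : Type*} [Field K] {n : ℕ} {σ : K →+* K}

variable (σ) in
def hermForm : (Fin n → K) →ₗ[K] (Fin n → K) →ₛₗ[σ] K :=
  LinearMap.mk₂'ₛₗ (RingHom.id K) σ (hermInner σ)
    (fun x x' y ↦ by simp [hermInner, add_mul, Finset.sum_add_distrib])
    (fun c x y ↦ by simp [hermInner, Finset.mul_sum, mul_assoc])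
    (fun x y y' ↦ by simp [hermInner, mul_add, Finset.sum_add_distrib])
    (fun c x y ↦ by simp [hermInner, Finset.mul_sum, mul_left_comm])

theorem hermForm_apply (x y : Fin n → K) : hermForm σ x y = hermInner σ x y := rfl

theorem map_hermInner (hσ : Function.Involutive σ) (x y : Fin n → K) :
    σ (hermInner σ x y) = hermInner σ y x := by
  simp only [hermInner, map_sum, map_mul, hσ _, mul_comm]

theorem ker_domRestrict₁₂_hermForm (hσ : Function.Involutive σ) (C : Submodule K (Fin n → K)) :
    LinearMap.ker ((hermForm σ).domRestrict₁₂ C C) = (C ⊓ hermDual σ C).comap C.subtype := by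
  ext x
  simp only [LinearMap.mem_ker, Submodule.mem_comap, Submodule.subtype_apply, Submodule.mem_inf,
    SetLike.coe_mem, true_and, LinearMap.ext_iff, LinearMap.domRestrict₁₂_apply, hermForm_apply,
    LinearMap.zero_apply, Subtype.forall]
  exact forall₂_congr fun y _ ↦ by rw [← map_hermInner hσ, map_eq_zero_iff σ hσ.injective]

end HermitianCode

theorem card_selfOrthogonal_codewords_outside_hull_general
    (q : ℕ)
    {K : Type*} [Field K] [Fintype K] (hK : Fintype.card K = q ^ 2)
    (σ : K →+* K) (hσ : ∀ x : K, σ x = x ^ q)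
    (n k ℓ : ℕ) (hℓk : ℓ < k)
    (C : Submodule K (Fin n → K)) (hC : Module.finrank K C = k)
    (hHull : Module.finrank K ↥(C ⊓ hermDual σ C) = ℓ) :
    (Nat.card {c : Fin n → K //
        c ∈ C ∧ c ∉ C ⊓ hermDual σ C ∧ hermInner σ c c = 0} : ℤ) =
      (N0 q (k - ℓ) - 1) * (q : ℤ) ^ (2 * ℓ) := by
  have hσσ : Function.Involutive σ := fun x ↦ by
    rw [hσ, hσ, ← pow_mul, ← sq, ← hK, FiniteField.pow_card]
  set B := (hermForm σ).domRestrict₁₂ C C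
  have hB (x y : C) : σ (B x y) = B y x := map_hermInner hσσ (x : Fin n → K) y
  have hker : LinearMap.ker B = (C ⊓ hermDual σ C).comap C.subtype :=
    ker_domRestrict₁₂_hermForm hσσ C
  have hℓ : finrank K (LinearMap.ker B) = ℓ :=
    hker ▸ hHull ▸ (Submodule.comapSubtypeEquivOfLe inf_le_left).finrank_eq
  have e : {c : Fin n → K // c ∈ C ∧ c ∉ C ⊓ hermDual σ C ∧ hermInner σ c c = 0} ≃
      {x : C // x ∉ LinearMap.ker B ∧ B x x = 0} :=
    (Equiv.subtypeSubtypeEquivSubtypeInter (· ∈ C)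
      fun c ↦ c ∉ C ⊓ hermDual σ C ∧ hermInner σ c c = 0).symm.trans
      (Equiv.subtypeEquivRight fun x ↦ by rw [hker]; rfl)
  rw [Nat.card_congr e, card_isotropic_notMem_ker hK hσ hB (by omega), hC, hℓ]

/-- If `C` is a linear `[n,k]_{q²}` code with `ℓ`-dimensional Hermitian
hull, then the number of Hermitian self-orthogonal codewords of `C \ Hull_H(C)` equals
`(N₀^{q+1}(k-ℓ) - 1) q^{2ℓ}`. -/
theorem card_selfOrthogonal_codewords_outside_hull
    (q : ℕ) (hq : IsPrimePow q)
    {K : Type*} [Field K] [Fintype K] (hK : Fintype.card K = q ^ 2)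
    (σ : K →+* K) (hσ : ∀ x : K, σ x = x ^ q)
    (n k ℓ : ℕ) (hℓk : ℓ < k)
    (C : Submodule K (Fin n → K)) (hC : Module.finrank K C = k)
    (hHull : Module.finrank K ↥(C ⊓ hermDual σ C) = ℓ) :
    (Nat.card {c : Fin n → K //
        c ∈ C ∧ c ∉ C ⊓ hermDual σ C ∧ hermInner σ c c = 0} : ℤ) =
      (N0 q (k - ℓ) - 1) * (q : ℤ) ^ (2 * ℓ) :=
  card_selfOrthogonal_codewords_outside_hull_general q hK σ hσ n k ℓ hℓk C hC hHull
end
end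

section
/- Let q be a prime power and let C₁ and C₂ be two symplectic LCD [2n,2k]_q codes. Then there exists a symplectic matrix Q ∈ Sp¹_{2n}(q) such that C₂ = C₁Q. Conversely, for any symplectic LCD [2n,2k]_q code C and any symplectic matrix Q ∈ Sp¹_{2n}(q), the code CQ is also a symplectic LCD [2n,2k]_q code. -/
open scoped BigOperators
open Matrix

noncomputable section

/-- The symplectic inner product `⟨x,y⟩_s = ∑_{i=1}^n (x_i y_{n+i} - x_{n+i} y_i)` on `K^{2n}`. -/
def sympInner {K : Type*} [Field K] (n : ℕ) (x y : Fin (2 * n) → K) : K :=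
  ∑ i : Fin n,
    (x ⟨i.1, by have := i.2; omega⟩ * y ⟨n + i.1, by have := i.2; omega⟩ -
      x ⟨n + i.1, by have := i.2; omega⟩ * y ⟨i.1, by have := i.2; omega⟩)

/-- The symplectic dual `C^{⊥s}` of a code `C ⊆ K^{2n}`. -/
def sympDual {K : Type*} [Field K] (n : ℕ) (C : Submodule K (Fin (2 * n) → K)) :
    Submodule K (Fin (2 * n) → K) where
  carrier := {y | ∀ x ∈ C, sympInner n x y = 0}
  zero_mem' := by
    intro x hx
    simp [sympInner]
  add_mem' := by
    intro y z hy hz x hx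
    have h1 := hy x hx
    have h2 := hz x hx
    simp only [sympInner, Pi.add_apply] at h1 h2 ⊢
    calc (∑ i : Fin n, _) = (∑ i : Fin n,
          (x ⟨i.1, by have := i.2; omega⟩ * y ⟨n + i.1, by have := i.2; omega⟩ -
            x ⟨n + i.1, by have := i.2; omega⟩ * y ⟨i.1, by have := i.2; omega⟩)) +
        ∑ i : Fin n,
          (x ⟨i.1, by have := i.2; omega⟩ * z ⟨n + i.1, by have := i.2; omega⟩ -
            x ⟨n + i.1, by have := i.2; omega⟩ * z ⟨i.1, by have := i.2; omega⟩) := by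
          rw [← Finset.sum_add_distrib]
          exact Finset.sum_congr rfl fun i _ => by ring
      _ = 0 := by rw [h1, h2, add_zero]
  smul_mem' := by
    intro c y hy x hx
    have h := hy x hx
    simp only [sympInner, Pi.smul_apply, smul_eq_mul] at h ⊢
    calc (∑ i : Fin n, _) = c * ∑ i : Fin n,
          (x ⟨i.1, by have := i.2; omega⟩ * y ⟨n + i.1, by have := i.2; omega⟩ -
            x ⟨n + i.1, by have := i.2; omega⟩ * y ⟨i.1, by have := i.2; omega⟩) := by
          rw [Finset.mul_sum]
          exact Finset.sum_congr rfl fun i _ => by ring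
      _ = 0 := by rw [h, mul_zero]

/-- The matrix `Ω_n = [[O, I_n], [-I_n, O]]` defining the symplectic inner product. -/
def sympOmega (n : ℕ) (K : Type*) [Field K] : Matrix (Fin (2 * n)) (Fin (2 * n)) K :=
  Matrix.of fun i j => if j.1 = i.1 + n then 1 else if i.1 = j.1 + n then -1 else 0

/-- The block diagonal matrix `diag(J₂, …, J₂)` (with `J₂ = [[0,1],[-1,0]]`) of size `N`. -/
def jayBlocks (N : ℕ) (K : Type*) [Field K] : Matrix (Fin N) (Fin N) K :=
  Matrix.of fun i j =>
    if i.1 % 2 = 0 ∧ j.1 = i.1 + 1 then 1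
    else if j.1 % 2 = 0 ∧ i.1 = j.1 + 1 then -1 else 0


/-!
The form `B x y = x Ω yᵀ` is alternating and nondegenerate; a code `C` is symplectic LCD exactly
when `B` restricted to `C` is nondegenerate, and `Q` is symplectic exactly when `x ↦ x Q` is an
isometry of `B`. Nondegenerate alternating spaces of equal dimension are isometric (split off a
hyperbolic plane `⟨x, y⟩` with `B x y = 1` and induct on the dimension). Hence `C₁ ≅ C₂` and
`C₁^⊥ ≅ C₂^⊥` isometrically, and the orthogonal sum of these two isometries is an isometry of the
whole space carrying `C₁` onto `C₂`. Conversely, an isometry `Q` carries `C^⊥` onto `(C Q)^⊥`, so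
`C Q ∩ (C Q)^⊥ = (C ∩ C^⊥) Q = 0`.
-/

open Module Submodule
open LinearMap (BilinForm)

namespace LinearMap.BilinForm

variable {K V V' : Type*} [Field K] [AddCommGroup V] [Module K V] [AddCommGroup V'] [Module K V']

theorem apply_add_add_of_mem_orthogonal {B : BilinForm K V} (hB : B.IsRefl) {W : Submodule K V}
    {a b a' b' : V} (ha : a ∈ W) (hb : b ∈ W) (ha' : a' ∈ B.orthogonal W)
    (hb' : b' ∈ B.orthogonal W) : B (a + a') (b + b') = B a b + B a' b' := by
  have hab' : B a b' = 0 := hb' a ha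
  have ha'b : B a' b = 0 := hB _ _ (ha' b hb)
  simp only [map_add, LinearMap.add_apply, hab', ha'b, add_zero, zero_add]

theorem exists_isometry_of_isCompl_orthogonal {B : BilinForm K V} {B' : BilinForm K V'}
    (hB : B.IsRefl) (hB' : B'.IsRefl) {W : Submodule K V} {U : Submodule K V'}
    (hW : IsCompl W (B.orthogonal W)) (hU : IsCompl U (B'.orthogonal U))
    (φ : W ≃ₗ[K] U) (hφ : (B'.restrict U).comp φ φ = B.restrict W)
    (ψ : B.orthogonal W ≃ₗ[K] B'.orthogonal U)
    (hψ : (B'.restrict (B'.orthogonal U)).comp ψ ψ = B.restrict (B.orthogonal W)) :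
    ∃ g : V ≃ₗ[K] V', B'.comp g g = B ∧ W.map (g : V →ₗ[K] V') = U := by
  let g : V ≃ₗ[K] V' := ((prodEquivOfIsCompl _ _ hW).symm.trans (φ.prodCongr ψ)).trans
    (prodEquivOfIsCompl _ _ hU)
  have hg (a : W) (a' : B.orthogonal W) : g (a + a') = φ a + ψ a' := by
    simp [g]
  have hdecomp (v : V) : ∃ (a : W) (a' : B.orthogonal W), v = a + a' := by
    obtain ⟨a, ha, a', ha', rfl⟩ := mem_sup.mp (hW.sup_eq_top ▸ mem_top : v ∈ W ⊔ _)
    exact ⟨⟨a, ha⟩, ⟨a', ha'⟩, rfl⟩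
  refine ⟨g, ?_, ?_⟩
  · ext u v
    obtain ⟨a, a', rfl⟩ := hdecomp u
    obtain ⟨b, b', rfl⟩ := hdecomp v
    rw [comp_apply, LinearEquiv.coe_coe, hg, hg,
      apply_add_add_of_mem_orthogonal hB' (φ a).2 (φ b).2 (ψ a').2 (ψ b').2,
      apply_add_add_of_mem_orthogonal hB a.2 b.2 a'.2 b'.2]
    have hφab := congr($hφ a b)
    have hψab := congr($hψ a' b')
    simp only [comp_apply, restrict_apply, domRestrict_apply, LinearEquiv.coe_coe] at hφab hψab
    rw [hφab, hψab]
  · have hgW (a : W) : g a = φ a := by simpa using hg a 0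
    ext v
    refine ⟨?_, fun hv ↦ ⟨φ.symm ⟨v, hv⟩, (φ.symm _).2, by simp [hgW]⟩⟩
    rintro ⟨a, ha, rfl⟩
    simp [hgW ⟨a, ha⟩]

theorem IsAlt.restrict {B : BilinForm K V} (hB : B.IsAlt) (W : Submodule K V) :
    (B.restrict W).IsAlt :=
  fun u ↦ hB u

theorem exists_apply_eq_one [Nontrivial V] {B : BilinForm K V} (hB : B.Nondegenerate) :
    ∃ x y, B x y = 1 := by
  obtain ⟨x, hx⟩ := exists_ne (0 : V)
  obtain ⟨y, hy⟩ : ∃ y, B x y ≠ 0 := by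
    by_contra! h
    exact hx (hB.1 x h)
  exact ⟨x, (B x y)⁻¹ • y, by simp [hy]⟩

section HyperbolicPair

variable {B : BilinForm K V} {x y : V}

theorem apply_vecCons_apply_vecCons (hB : B.IsAlt) (hxy : B x y = 1) (i j : Fin 2) :
    B (![x, y] i) (![x, y] j) = !![0, 1; -1, 0] i j := by
  have hyx : B y x = -1 := by rw [← hB.neg_eq, hxy]
  fin_cases i <;> fin_cases j <;> simp [hB.self_eq_zero, hxy, hyx]

theorem linearIndependent_pair_of_apply_eq_one (hB : B.IsAlt) (hxy : B x y = 1) :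
    LinearIndependent K ![x, y] := by
  refine LinearIndependent.pair_iff.mpr fun s t hst ↦ ?_
  have hx := congr(B x $hst)
  have hy := congr(B y $hst)
  have hyx : B y x = -1 := by rw [← hB.neg_eq, hxy]
  simp [hB.self_eq_zero, hxy, hyx] at hx hy
  exact ⟨hy, hx⟩

theorem finrank_span_pair_of_apply_eq_one (hB : B.IsAlt) (hxy : B x y = 1) :
    finrank K (span K (Set.range ![x, y])) = 2 :=
  (finrank_span_eq_card (linearIndependent_pair_of_apply_eq_one hB hxy)).trans (Fintype.card_fin 2)

theorem nondegenerate_restrict_span_pair (hB : B.IsAlt) (hxy : B x y = 1) :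
    (B.restrict (span K (Set.range ![x, y]))).Nondegenerate := by
  let b := Basis.span (linearIndependent_pair_of_apply_eq_one hB hxy)
  have hgram : toMatrix b (B.restrict _) = !![0, 1; -1, 0] := by
    ext i j
    simp [toMatrix_apply, b, Basis.span_apply, apply_vecCons_apply_vecCons hB hxy]
  rw [← nondegenerate_toMatrix_iff b, hgram]
  exact Matrix.nondegenerate_of_det_ne_zero (by simp [Matrix.det_fin_two_of])

theorem exists_isometry_span_pair {B' : BilinForm K V'} {x' y' : V'} (hB : B.IsAlt)
    (hB' : B'.IsAlt) (hxy : B x y = 1) (hxy' : B' x' y' = 1) :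
    ∃ φ : span K (Set.range ![x, y]) ≃ₗ[K] span K (Set.range ![x', y']),
      (B'.restrict (span K (Set.range ![x', y']))).comp φ φ =
        B.restrict (span K (Set.range ![x, y])) := by
  let b := Basis.span (linearIndependent_pair_of_apply_eq_one hB hxy)
  let b' := Basis.span (linearIndependent_pair_of_apply_eq_one hB' hxy')
  refine ⟨b.equiv b' (Equiv.refl _), ext_basis b fun i j ↦ ?_⟩
  rw [comp_apply, LinearEquiv.coe_coe, Basis.equiv_apply, Basis.equiv_apply]
  simp [b, b', Basis.span_apply, apply_vecCons_apply_vecCons hB hxy,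
    apply_vecCons_apply_vecCons hB' hxy']

end HyperbolicPair

theorem orthogonal_map_of_comp_eq {B : BilinForm K V} {B' : BilinForm K V'} (e : V ≃ₗ[K] V')
    (he : B'.comp e e = B) (W : Submodule K V) :
    B'.orthogonal (W.map (e : V →ₗ[K] V')) = (B.orthogonal W).map (e : V →ₗ[K] V') := by
  ext v
  rw [mem_map_equiv]
  simp only [mem_orthogonal_iff, ← he, comp_apply, mem_map, LinearEquiv.coe_coe,
    LinearEquiv.apply_symm_apply, forall_exists_index, and_imp, forall_apply_eq_imp_iff₂]

variable [FiniteDimensional K V] [FiniteDimensional K V']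

theorem nondegenerate_restrict_orthogonal {B : BilinForm K V} (hB : B.IsRefl)
    (hBn : B.Nondegenerate) {W : Submodule K V} (hW : (B.restrict W).Nondegenerate) :
    (B.restrict (B.orthogonal W)).Nondegenerate := by
  rw [restrict_nondegenerate_iff_isCompl_orthogonal hB, orthogonal_orthogonal hBn hB]
  exact (isCompl_orthogonal_of_restrict_nondegenerate hB hW).symm

theorem exists_isometry_of_finrank_eq {B : BilinForm K V} {B' : BilinForm K V'}
    (hB : B.IsAlt) (hB' : B'.IsAlt) (hBn : B.Nondegenerate) (hB'n : B'.Nondegenerate)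
    (h : finrank K V = finrank K V') : ∃ e : V ≃ₗ[K] V', B'.comp e e = B := by
  induction hd : finrank K V using Nat.strong_induction_on generalizing V V' with
  | _ d ih =>
  rcases d.eq_zero_or_pos with rfl | hpos
  · have := finrank_zero_iff.mp hd
    exact ⟨LinearEquiv.ofFinrankEq V V' h, ext fun u v ↦ by simp [Subsingleton.elim u 0]⟩
  have : Nontrivial V := finrank_pos_iff.mp (hd ▸ hpos)
  have : Nontrivial V' := finrank_pos_iff.mp (h ▸ hd ▸ hpos)
  obtain ⟨x, y, hxy⟩ := exists_apply_eq_one hBn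
  obtain ⟨x', y', hxy'⟩ := exists_apply_eq_one hB'n
  set H := span K (Set.range ![x, y])
  set H' := span K (Set.range ![x', y'])
  obtain ⟨φ, hφ⟩ := exists_isometry_span_pair hB hB' hxy hxy'
  have hH := nondegenerate_restrict_span_pair hB hxy
  have hH' := nondegenerate_restrict_span_pair hB' hxy'
  have hfinrank : finrank K (B.orthogonal H) = d - 2 := by
    rw [finrank_orthogonal hBn, hd, finrank_span_pair_of_apply_eq_one hB hxy]
  have hfinrank' : finrank K (B'.orthogonal H') = d - 2 := by
    rw [finrank_orthogonal hB'n, ← h, hd, finrank_span_pair_of_apply_eq_one hB' hxy']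
  obtain ⟨ψ, hψ⟩ := ih (d - 2) (by omega) (B := B.restrict (B.orthogonal H))
    (B' := B'.restrict (B'.orthogonal H')) (hB.restrict _) (hB'.restrict _)
    (nondegenerate_restrict_orthogonal hB.isRefl hBn hH)
    (nondegenerate_restrict_orthogonal hB'.isRefl hB'n hH') (hfinrank.trans hfinrank'.symm)
    hfinrank
  obtain ⟨g, hg, -⟩ := exists_isometry_of_isCompl_orthogonal hB.isRefl hB'.isRefl
    (isCompl_orthogonal_of_restrict_nondegenerate hB.isRefl hH)
    (isCompl_orthogonal_of_restrict_nondegenerate hB'.isRefl hH') φ hφ ψ hψ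
  exact ⟨g, hg⟩

theorem exists_isometry_map_eq {B : BilinForm K V} (hB : B.IsAlt) (hBn : B.Nondegenerate)
    {W₁ W₂ : Submodule K V} (h₁ : (B.restrict W₁).Nondegenerate)
    (h₂ : (B.restrict W₂).Nondegenerate) (h : finrank K W₁ = finrank K W₂) :
    ∃ g : V ≃ₗ[K] V, B.comp g g = B ∧ W₁.map (g : V →ₗ[K] V) = W₂ := by
  obtain ⟨φ, hφ⟩ := exists_isometry_of_finrank_eq (hB.restrict _) (hB.restrict _) h₁ h₂ h
  obtain ⟨ψ, hψ⟩ := exists_isometry_of_finrank_eq (hB.restrict _) (hB.restrict _)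
    (nondegenerate_restrict_orthogonal hB.isRefl hBn h₁)
    (nondegenerate_restrict_orthogonal hB.isRefl hBn h₂)
    (by rw [finrank_orthogonal hBn, finrank_orthogonal hBn, h])
  exact exists_isometry_of_isCompl_orthogonal hB.isRefl hB.isRefl
    (isCompl_orthogonal_of_restrict_nondegenerate hB.isRefl h₁)
    (isCompl_orthogonal_of_restrict_nondegenerate hB.isRefl h₂) φ hφ ψ hψ

end LinearMap.BilinForm

theorem Matrix.mul_mul_transpose_eq_self_iff {R ι : Type*} [CommSemiring R] [Fintype ι]
    [DecidableEq ι] (M Q : Matrix ι ι R) :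
    Q * M * Qᵀ = M ↔ (toBilin' M).comp Q.vecMulLinear Q.vecMulLinear = toBilin' M := by
  rw [← mulVecLin_transpose, ← toLin'_apply', toBilin'_comp, transpose_transpose,
    (toBilin' (R₁ := R) (n := ι)).injective.eq_iff]

section Symplectic

open LinearMap.BilinForm

variable {K : Type*} [Field K] {n : ℕ}

abbrev finSumFinEquivTwoMul (n : ℕ) : Fin n ⊕ Fin n ≃ Fin (2 * n) :=
  finSumFinEquiv.trans (finCongr (two_mul n).symm)

theorem sympOmega_submatrix :
    (sympOmega n K).submatrix (finSumFinEquivTwoMul n) (finSumFinEquivTwoMul n) =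
      fromBlocks 0 1 (-1) 0 := by
  ext (i | i) (j | j) <;> simp [sympOmega, one_apply, Fin.ext_iff]
    <;> split_ifs <;> first | omega | simp

theorem toBilin'_sympOmega_apply (x y : Fin (2 * n) → K) :
    toBilin' (sympOmega n K) x y = sympInner n x y := by
  have hΩ := congr_fun₂ (sympOmega_submatrix (n := n) (K := K))
  simp only [submatrix_apply] at hΩ
  rw [toBilin'_apply, ← (finSumFinEquivTwoMul n).sum_comp]
  simp only [← (finSumFinEquivTwoMul n).sum_comp (fun j ↦ _ * sympOmega n K _ j * _), hΩ,
    Fintype.sum_sum_type]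
  simp [one_apply, sympInner, Finset.sum_sub_distrib, Fin.natAdd, add_comm, ← sub_eq_add_neg]
  rfl

theorem sympDual_eq_orthogonal (C : Submodule K (Fin (2 * n) → K)) :
    sympDual n C = (toBilin' (sympOmega n K)).orthogonal C := by
  ext y
  simp only [mem_orthogonal_iff, toBilin'_sympOmega_apply]
  rfl

theorem isAlt_toBilin'_sympOmega : (toBilin' (sympOmega n K)).IsAlt := fun x ↦ by
  rw [toBilin'_sympOmega_apply, sympInner]
  exact Finset.sum_eq_zero fun i _ ↦ by ring

theorem nondegenerate_toBilin'_sympOmega : (toBilin' (sympOmega n K)).Nondegenerate := by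
  rw [nondegenerate_toBilin'_iff_det_ne_zero,
    ← det_submatrix_equiv_self (finSumFinEquivTwoMul n), sympOmega_submatrix]
  refine det_ne_zero_of_right_inverse (B := fromBlocks 0 (-1) 1 0) ?_
  simp [fromBlocks_multiply]

theorem nondegenerate_restrict_iff_inf_sympDual_eq_bot (C : Submodule K (Fin (2 * n) → K)) :
    ((toBilin' (sympOmega n K)).restrict C).Nondegenerate ↔ C ⊓ sympDual n C = ⊥ := by
  rw [restrict_nondegenerate_iff_isCompl_orthogonal isAlt_toBilin'_sympOmega.isRefl,
    isCompl_orthogonal_iff_disjoint isAlt_toBilin'_sympOmega.isRefl, sympDual_eq_orthogonal,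
    disjoint_iff]

theorem sympDual_map_vecMulLinear (C : Submodule K (Fin (2 * n) → K))
    {Q : Matrix (Fin (2 * n)) (Fin (2 * n)) K} (hQ : IsUnit Q)
    (hQΩ : Q * sympOmega n K * Qᵀ = sympOmega n K) :
    sympDual n (C.map Q.vecMulLinear) = (sympDual n C).map Q.vecMulLinear := by
  let e := LinearEquiv.ofInjectiveEndo Q.vecMulLinear (vecMul_injective_iff_isUnit.mpr hQ)
  have he : (e : (Fin (2 * n) → K) →ₗ[K] _) = Q.vecMulLinear := rfl
  rw [← he, sympDual_eq_orthogonal, sympDual_eq_orthogonal, orthogonal_map_of_comp_eq e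
    (by rwa [he, ← mul_mul_transpose_eq_self_iff])]

theorem exists_symplectic_map_eq {C₁ C₂ : Submodule K (Fin (2 * n) → K)}
    (h : finrank K C₁ = finrank K C₂)
    (hL₁ : C₁ ⊓ sympDual n C₁ = ⊥) (hL₂ : C₂ ⊓ sympDual n C₂ = ⊥) :
    ∃ Q : Matrix (Fin (2 * n)) (Fin (2 * n)) K,
      IsUnit Q ∧ Q * sympOmega n K * Qᵀ = sympOmega n K ∧ C₂ = C₁.map Q.vecMulLinear := by
  obtain ⟨g, hg, hgC⟩ := exists_isometry_map_eq isAlt_toBilin'_sympOmega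
    nondegenerate_toBilin'_sympOmega ((nondegenerate_restrict_iff_inf_sympDual_eq_bot C₁).mpr hL₁)
    ((nondegenerate_restrict_iff_inf_sympDual_eq_bot C₂).mpr hL₂) h
  obtain ⟨Q, hQ⟩ : ∃ Q : Matrix (Fin (2 * n)) (Fin (2 * n)) K, Q.vecMulLinear = g :=
    ⟨(LinearMap.toMatrix' g)ᵀ, by rw [vecMulLinear_transpose, ← toLin'_apply', toLin'_toMatrix']⟩
  refine ⟨Q, vecMul_injective_iff_isUnit.mp ?_, ?_, ?_⟩
  · simpa [← vecMulLinear_apply, hQ] using g.injective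
  · rwa [mul_mul_transpose_eq_self_iff, hQ]
  · rw [hQ, hgC]

end Symplectic

theorem symplecticLCD_symplectic_orbit_general
    {K : Type*} [Field K]
    (n k : ℕ)
    (C₁ C₂ : Submodule K (Fin (2 * n) → K))
    (hC₁ : Module.finrank K C₁ = 2 * k) (hC₂ : Module.finrank K C₂ = 2 * k)
    (hL₁ : C₁ ⊓ sympDual n C₁ = ⊥) (hL₂ : C₂ ⊓ sympDual n C₂ = ⊥) :
    (∃ Q : Matrix (Fin (2 * n)) (Fin (2 * n)) K,
        IsUnit Q ∧ Q * sympOmega n K * Qᵀ = sympOmega n K ∧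
        C₂ = C₁.map (Matrix.vecMulLinear Q)) ∧
    ∀ C : Submodule K (Fin (2 * n) → K), Module.finrank K C = 2 * k →
      C ⊓ sympDual n C = ⊥ →
      ∀ Q : Matrix (Fin (2 * n)) (Fin (2 * n)) K,
        IsUnit Q → Q * sympOmega n K * Qᵀ = sympOmega n K →
        Module.finrank K (C.map (Matrix.vecMulLinear Q)) = 2 * k ∧
          C.map (Matrix.vecMulLinear Q) ⊓ sympDual n (C.map (Matrix.vecMulLinear Q)) = ⊥ := by
  refine ⟨exists_symplectic_map_eq (hC₁.trans hC₂.symm) hL₁ hL₂, fun C hC hL Q hQ hQΩ ↦ ⟨?_, ?_⟩⟩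
  · rw [← hC]
    exact (equivMapOfInjective _ (vecMul_injective_iff_isUnit.mpr hQ) C).finrank_eq.symm
  · rw [sympDual_map_vecMulLinear C hQ hQΩ,
      ← Submodule.map_inf _ (vecMul_injective_iff_isUnit.mpr hQ), hL, Submodule.map_bot]

/-- Any two symplectic LCD `[2n,2k]_q` codes lie on the same orbit of the
symplectic group `Sp¹_{2n}(q)`, and the symplectic group preserves the class of symplectic
LCD `[2n,2k]_q` codes. -/
theorem symplecticLCD_symplectic_orbit
    (q : ℕ) (hq : IsPrimePow q)
    {K : Type*} [Field K] [Fintype K] (hK : Fintype.card K = q)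
    (n k : ℕ)
    (C₁ C₂ : Submodule K (Fin (2 * n) → K))
    (hC₁ : Module.finrank K C₁ = 2 * k) (hC₂ : Module.finrank K C₂ = 2 * k)
    (hL₁ : C₁ ⊓ sympDual n C₁ = ⊥) (hL₂ : C₂ ⊓ sympDual n C₂ = ⊥) :
    (∃ Q : Matrix (Fin (2 * n)) (Fin (2 * n)) K,
        IsUnit Q ∧ Q * sympOmega n K * Qᵀ = sympOmega n K ∧
        C₂ = C₁.map (Matrix.vecMulLinear Q)) ∧
    ∀ C : Submodule K (Fin (2 * n) → K), Module.finrank K C = 2 * k →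
      C ⊓ sympDual n C = ⊥ →
      ∀ Q : Matrix (Fin (2 * n)) (Fin (2 * n)) K,
        IsUnit Q → Q * sympOmega n K * Qᵀ = sympOmega n K →
        Module.finrank K (C.map (Matrix.vecMulLinear Q)) = 2 * k ∧
          C.map (Matrix.vecMulLinear Q) ⊓ sympDual n (C.map (Matrix.vecMulLinear Q)) = ⊥ :=
  symplecticLCD_symplectic_orbit_general n k C₁ C₂ hC₁ hC₂ hL₁ hL₂
end
end
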